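/- φ̃(n) = 6 if and only if n ∈ {11, 21, 32, 40, 72, 78, 210}. -/

import Mathlib

/-- φ̃(n): number of m with 1 ≤ m ≤ n, gcd(m,n)=1, m not prime. -/
def phiT (n : ℕ) : ℕ :=
  ((Finset.Icc 1 n).filter (fun m => Nat.gcd m n = 1 ∧ ¬ m.Prime)).card

/-- The product of the first k primes. -/
noncomputable def primorialN (k : ℕ) : ℕ := ∏ i ∈ Finset.range k, Nat.nth Nat.Prime i

/-!
Let `n ≥ 17²` and let `t` be the number of primes `≤ √n` dividing `n`. Their product divides `n`,
so the product of the first `t` primes is at most `n`. Bertrand's postulate gives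
`p_{t+2}² ≤ p_0 ⋯ p_{t-1}` for `t ≥ 5`, so at least `t + 3` primes are `≤ √n` and three of them,
`p, q, r`, do not divide `n`. Then `1, p², q², r², pq, pr, qr` are seven non-primes in `[1, n]`
coprime to `n`, so `φ̃(n) ≥ 7`. The cases `n ≤ 288` are settled by computation.
-/

open Finset

lemma Nat.nth_prime_succ_le_two_mul (k : ℕ) : nth Prime (k + 1) ≤ 2 * nth Prime k := by
  obtain ⟨q, hq, hkq, hq2⟩ :=
    exists_prime_lt_and_le_two_mul (nth Prime k) (prime_nth_prime k).ne_zero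
  by_contra! h
  exact hkq.not_ge (le_nth_of_lt_nth_succ (by omega) hq)

lemma Nat.prime_mul_eq_prime_mul {a b c d : ℕ} (ha : a.Prime) (hc : c.Prime) (hd : d.Prime)
    (h : a * b = c * d) : a = c ∧ b = d ∨ a = d ∧ b = c := by
  rcases (Nat.Prime.dvd_mul ha).1 (h ▸ dvd_mul_right a b) with hac | had
  · obtain rfl := (prime_dvd_prime_iff_eq ha hc).1 hac
    exact .inl ⟨rfl, Nat.eq_of_mul_eq_mul_left ha.pos h⟩
  · obtain rfl := (prime_dvd_prime_iff_eq ha hd).1 had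
    exact .inr ⟨rfl, Nat.eq_of_mul_eq_mul_left ha.pos (h.trans (mul_comm c a))⟩

lemma Sym2.mul_injOn_prime : Set.InjOn Sym2.mul {z : Sym2 ℕ | ∀ p ∈ z, p.Prime} := by
  intro z hz w hw h
  induction z using Sym2.ind with | _ a b => ?_
  induction w using Sym2.ind with | _ c d => ?_
  simp only [Set.mem_ofPred_eq, Sym2.mem_iff, forall_eq_or_imp, forall_eq] at hz hw
  exact Sym2.eq_iff.2 (Nat.prime_mul_eq_prime_mul hz.1 hw.1 hw.2 h)

lemma primorialN_succ (k : ℕ) : primorialN (k + 1) = primorialN k * Nat.nth Nat.Prime k :=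
  prod_range_succ _ _

lemma primorialN_le_prod {s : Finset ℕ} (hs : ∀ p ∈ s, p.Prime) :
    primorialN #s ≤ ∏ p ∈ s, p := by
  induction s using Finset.induction_on_max with
  | empty => simp [primorialN]
  | insert a s ha ih =>
    have has : a ∉ s := fun h => lt_irrefl a (ha a h)
    have hcount : #s ≤ Nat.count Nat.Prime a := by
      rw [Nat.count_eq_card_filter_range]
      exact card_le_card fun p hp =>
        mem_filter.2 ⟨mem_range.2 (ha p hp), hs p (mem_insert_of_mem hp)⟩
    have hnth : Nat.nth Nat.Prime #s ≤ a :=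
      (Nat.nth_monotone Nat.infinite_setOfPred_prime hcount).trans_eq
        (Nat.nth_count (hs a (mem_insert_self a s)))
    rw [card_insert_of_notMem has, primorialN_succ, prod_insert has, mul_comm a]
    exact Nat.mul_le_mul (ih fun p hp => hs p (mem_insert_of_mem hp)) hnth

lemma sq_nth_prime_add_two_le_primorialN {t : ℕ} (ht : 5 ≤ t) :
    Nat.nth Nat.Prime (t + 2) ^ 2 ≤ primorialN t := by
  induction t, ht using Nat.le_induction with
  | base =>
    have h19 : Nat.nth Nat.Prime 7 = 19 := Nat.nth_count (p := Nat.Prime) (n := 19) (by norm_num)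
    simp [primorialN, prod_range_succ, h19]
  | succ t ht ih =>
    calc Nat.nth Nat.Prime (t + 3) ^ 2 ≤ (2 * Nat.nth Nat.Prime (t + 2)) ^ 2 :=
          Nat.pow_le_pow_left (Nat.nth_prime_succ_le_two_mul _) 2
      _ = 4 * Nat.nth Nat.Prime (t + 2) ^ 2 := by ring
      _ ≤ Nat.nth Nat.Prime t * primorialN t :=
          Nat.mul_le_mul (by have := Nat.add_two_le_nth_prime t; omega) ih
      _ = primorialN (t + 1) := by rw [primorialN_succ, mul_comm]

lemma nth_prime_add_two_le_sqrt {n t : ℕ} (hn : 289 ≤ n) (ht : primorialN t ≤ n) :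
    Nat.nth Nat.Prime (t + 2) ≤ Nat.sqrt n := by
  rcases le_or_gt t 4 with ht4 | ht5
  · have h17 : Nat.nth Nat.Prime 6 = 17 := Nat.nth_count (p := Nat.Prime) (n := 17) (by norm_num)
    calc Nat.nth Nat.Prime (t + 2) ≤ Nat.nth Nat.Prime 6 :=
          Nat.nth_monotone Nat.infinite_setOfPred_prime (by omega)
      _ ≤ Nat.sqrt n := h17 ▸ Nat.le_sqrt.2 (by omega)
  · exact Nat.le_sqrt'.2 ((sq_nth_prime_add_two_le_primorialN ht5).trans ht)

lemma three_le_card_prime_le_sqrt_not_dvd {n : ℕ} (hn : 289 ≤ n) :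
    3 ≤ #{p ∈ Iic (Nat.sqrt n) | p.Prime ∧ ¬ p ∣ n} := by
  set P := {p ∈ Iic (Nat.sqrt n) | p.Prime}
  set t := #{p ∈ P | p ∣ n}
  have hdvd : primorialN t ≤ n :=
    (primorialN_le_prod fun p hp => (mem_filter.1 (mem_filter.1 hp).1).2).trans <|
      Nat.le_of_dvd (by omega) <|
        prod_primes_dvd n (fun p hp => (mem_filter.1 (mem_filter.1 hp).1).2.prime)
          fun p hp => (mem_filter.1 hp).2
  have hP : t + 3 ≤ #P := by
    calc t + 3 = #((range (t + 3)).image (Nat.nth Nat.Prime)) := by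
          rw [card_image_of_injective _ (Nat.nth_injective Nat.infinite_setOfPred_prime),
            card_range]
      _ ≤ #P := card_le_card fun p hp => by
          obtain ⟨i, hi, rfl⟩ := mem_image.1 hp
          refine mem_filter.2 ⟨mem_Iic.2 ?_, Nat.prime_nth_prime i⟩
          exact (Nat.nth_monotone Nat.infinite_setOfPred_prime (by simp at hi; omega)).trans
            (nth_prime_add_two_le_sqrt hn hdvd)
  have hsplit : t + #{p ∈ P | ¬ p ∣ n} = #P := card_filter_add_card_filter_not _
  rw [filter_filter] at hsplit
  omega

lemma card_sym2_add_one_le_phiT {n : ℕ} (hn : 0 < n) {S : Finset ℕ}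
    (hS : ∀ p ∈ S, p.Prime ∧ p ≤ Nat.sqrt n ∧ ¬ p ∣ n) : #S.sym2 + 1 ≤ phiT n := by
  have hprime : ∀ z ∈ S.sym2, ∀ p ∈ z, p.Prime := fun z hz p hp =>
    (hS p (mem_sym2_iff.1 hz p hp)).1
  have hone : 1 ∉ S.sym2.image Sym2.mul := by
    simp only [mem_image, not_exists, not_and]
    intro z hz
    induction z using Sym2.ind with | _ a b => ?_
    have ha := hprime _ hz a (Sym2.mem_mk_left a b)
    have hb := hprime _ hz b (Sym2.mem_mk_right a b)
    simpa using Nat.one_lt_mul_iff.2 ⟨ha.pos, hb.pos, .inl ha.one_lt⟩ |>.ne'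
  calc #S.sym2 + 1 = #(insert 1 (S.sym2.image Sym2.mul)) := by
        rw [card_insert_of_notMem hone, card_image_of_injOn
          (Sym2.mul_injOn_prime.mono fun z hz => hprime z hz)]
    _ ≤ phiT n := card_le_card ?_
  intro m hm
  rcases mem_insert.1 hm with rfl | hm
  · simp [Nat.one_le_iff_ne_zero.2 hn.ne', Nat.not_prime_one]
  obtain ⟨z, hz, rfl⟩ := mem_image.1 hm
  induction z using Sym2.ind with | _ a b => ?_
  obtain ⟨ha, han, hadvd⟩ := hS a (mem_sym2_iff.1 hz a (Sym2.mem_mk_left a b))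
  obtain ⟨hb, hbn, hbdvd⟩ := hS b (mem_sym2_iff.1 hz b (Sym2.mem_mk_right a b))
  refine mem_filter.2 ⟨mem_Icc.2 ⟨Nat.mul_pos ha.pos hb.pos, ?_⟩, ?_, ?_⟩
  · exact (Nat.mul_le_mul han hbn).trans (Nat.sqrt_le n)
  · exact Nat.Coprime.mul_left (ha.coprime_iff_not_dvd.2 hadvd) (hb.coprime_iff_not_dvd.2 hbdvd)
  · exact Nat.not_prime_mul ha.one_lt.ne' hb.one_lt.ne'

lemma seven_le_phiT {n : ℕ} (hn : 289 ≤ n) : 7 ≤ phiT n := by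
  set S := {p ∈ Iic (Nat.sqrt n) | p.Prime ∧ ¬ p ∣ n}
  have h3 : 3 ≤ #S := three_le_card_prime_le_sqrt_not_dvd hn
  have hchoose : Nat.choose 4 2 ≤ Nat.choose (#S + 1) 2 := Nat.choose_le_choose 2 (by omega)
  calc 7 ≤ #S.sym2 + 1 := by rw [card_sym2]; exact Nat.succ_le_succ hchoose
    _ ≤ phiT n := card_sym2_add_one_le_phiT (by omega) fun p hp => by
        simp only [S, mem_filter, mem_Iic] at hp
        exact ⟨hp.2.1, hp.1, hp.2.2⟩

lemma phiT_eq_six_iff_of_le_288 {n : ℕ} (hn : n ≤ 288) :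
    phiT n = 6 ↔ n ∈ ({11, 21, 32, 40, 72, 78, 210} : Finset ℕ) := by
  have hcheck : ∀ n < 289, phiT n = 6 ↔ n ∈ ({11, 21, 32, 40, 72, 78, 210} : Finset ℕ) := by
    decide +kernel
  exact hcheck n (by omega)

theorem stmt17_general (n : ℕ) :
    phiT n = 6 ↔ n ∈ ({11, 21, 32, 40, 72, 78, 210} : Finset ℕ) := by
  rcases le_or_gt n 288 with hsmall | hlarge
  · exact phiT_eq_six_iff_of_le_288 hsmall
  · have := seven_le_phiT hlarge
    simp only [mem_insert, mem_singleton]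
    omega

theorem stmt17 (n : ℕ) (hn : 0 < n) :
    phiT n = 6 ↔ n ∈ ({11, 21, 32, 40, 72, 78, 210} : Finset ℕ) :=
  stmt17_general n
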